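/- The family of dangerous cuts of a Steiner k-edge-connected graph is uncrossable: if A and B are dangerous cuts with A ∩ B ≠ ∅, A ∖ B ≠ ∅ and B ∖ A ≠ ∅, then either A ∩ B and A ∪ B are both dangerous cuts, or A ∖ B and B ∖ A are both dangerous cuts. -/

import Mathlib

open scoped Classical

/-- An unordered pair has exactly one endpoint in `C`. -/
def CrossesCut {α : Type*} (C : Finset α) (e : Sym2 α) : Prop :=
  ∃ x y : α, e = s(x, y) ∧ x ∈ C ∧ y ∉ C

/-- A dangerous cut: a set `C ⊆ V ∖ {r}` with `|δ(C)| = k` and `C ∩ R ≠ ∅`. -/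
def IsDangerous {α : Type*} (V : Finset α) (E : Finset (Sym2 α)) (R : Finset α)
    (r : α) (k : ℕ) (C : Finset α) : Prop :=
  C ⊆ V ∧ r ∉ C ∧ (E.filter fun e => CrossesCut C e).card = k ∧ (C ∩ R).Nonempty

/-!
The cut function is submodular, `|δ(A ∩ B)| + |δ(A ∪ B)| ≤ |δ(A)| + |δ(B)|`, and
posimodular, `|δ(A ∖ B)| + |δ(B ∖ A)| ≤ |δ(A)| + |δ(B)|`; both hold edge by edge. If `A ∩ B`
contains a terminal, then `A ∩ B` and `A ∪ B` both separate a terminal from `r`, so each has at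
least `k` edges, and submodularity forces both to have exactly `k`. Otherwise the terminals of `A` and of `B` lie in
`A ∖ B` and `B ∖ A`, and posimodularity gives the same conclusion for those two sets.
-/

open Finset

section

variable {α : Type*}

lemma crossesCut_mk_iff (C : Finset α) (x y : α) :
    CrossesCut C s(x, y) ↔ (x ∈ C ∧ y ∉ C) ∨ (y ∈ C ∧ x ∉ C) := by
  constructor
  · rintro ⟨a, b, hab, ha, hb⟩
    rcases Sym2.eq_iff.mp hab with ⟨rfl, rfl⟩ | ⟨rfl, rfl⟩ <;> tauto
  · rintro (⟨hx, hy⟩ | ⟨hy, hx⟩)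
    exacts [⟨x, y, rfl, hx, hy⟩, ⟨y, x, Sym2.eq_swap, hy, hx⟩]

section CutInequalities

variable [DecidableEq α] (E : Finset (Sym2 α)) (A B : Finset α)

lemma card_cut_inter_add_card_cut_union_le :
    (E.filter fun e => CrossesCut (A ∩ B) e).card +
      (E.filter fun e => CrossesCut (A ∪ B) e).card ≤
    (E.filter fun e => CrossesCut A e).card + (E.filter fun e => CrossesCut B e).card := by
  simp only [card_filter, ← sum_add_distrib]
  refine sum_le_sum fun e _ => ?_
  induction e using Sym2.inductionOn with
  | hf x y =>
    simp only [crossesCut_mk_iff, mem_inter, mem_union]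
    by_cases x ∈ A <;> by_cases x ∈ B <;> by_cases y ∈ A <;> by_cases y ∈ B <;> simp [*]

lemma card_cut_sdiff_add_card_cut_sdiff_le :
    (E.filter fun e => CrossesCut (A \ B) e).card +
      (E.filter fun e => CrossesCut (B \ A) e).card ≤
    (E.filter fun e => CrossesCut A e).card + (E.filter fun e => CrossesCut B e).card := by
  simp only [card_filter, ← sum_add_distrib]
  refine sum_le_sum fun e _ => ?_
  induction e using Sym2.inductionOn with
  | hf x y =>
    simp only [crossesCut_mk_iff, mem_sdiff]
    by_cases x ∈ A <;> by_cases x ∈ B <;> by_cases y ∈ A <;> by_cases y ∈ B <;> simp [*]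

end CutInequalities

lemma isDangerous_and_isDangerous_of_card_cut_add_le {V R : Finset α} {E : Finset (Sym2 α)}
    {r : α} {k : ℕ} (hr : r ∈ R)
    (hconn : ∀ C : Finset α, C ⊆ V → (C ∩ R).Nonempty → (R \ C).Nonempty →
      k ≤ (E.filter fun e => CrossesCut C e).card)
    {C D : Finset α} (hCV : C ⊆ V) (hDV : D ⊆ V) (hrC : r ∉ C) (hrD : r ∉ D)
    (hCR : (C ∩ R).Nonempty) (hDR : (D ∩ R).Nonempty)
    (hle : (E.filter fun e => CrossesCut C e).card + (E.filter fun e => CrossesCut D e).card ≤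
      k + k) :
    IsDangerous V E R r k C ∧ IsDangerous V E R r k D := by
  have hkC := hconn C hCV hCR ⟨r, mem_sdiff.mpr ⟨hr, hrC⟩⟩
  have hkD := hconn D hDV hDR ⟨r, mem_sdiff.mpr ⟨hr, hrD⟩⟩
  exact ⟨⟨hCV, hrC, by omega, hCR⟩, ⟨hDV, hrD, by omega, hDR⟩⟩

end

theorem stmt14_general {α : Type*} [DecidableEq α] (V : Finset α) (E : Finset (Sym2 α))
    (R : Finset α) (r : α) (hr : r ∈ R) (k : ℕ)
    (hconn : ∀ C : Finset α, C ⊆ V → (C ∩ R).Nonempty → (R \ C).Nonempty →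
      k ≤ (E.filter fun e => CrossesCut C e).card)
    (A B : Finset α) (hA : IsDangerous V E R r k A) (hB : IsDangerous V E R r k B) :
    (IsDangerous V E R r k (A ∩ B) ∧ IsDangerous V E R r k (A ∪ B)) ∨
      (IsDangerous V E R r k (A \ B) ∧ IsDangerous V E R r k (B \ A)) := by
  -- `IsDangerous` uses classical decidable equality; identify it with the given instance.
  obtain rfl := Subsingleton.elim ‹DecidableEq α› fun a b => Classical.propDecidable (a = b)
  obtain ⟨hAV, hrA, hcA, hAR⟩ := hA
  obtain ⟨hBV, hrB, hcB, hBR⟩ := hB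
  by_cases hABR : (A ∩ B ∩ R).Nonempty
  · left
    refine isDangerous_and_isDangerous_of_card_cut_add_le hr hconn
      (inter_subset_left.trans hAV) (union_subset hAV hBV) (by simp [hrA]) (by simp [hrA, hrB])
      hABR (hAR.mono (inter_subset_inter_right subset_union_left)) ?_
    simpa only [hcA, hcB] using card_cut_inter_add_card_cut_union_le E A B
  · right
    simp only [not_nonempty_iff_eq_empty, eq_empty_iff_forall_notMem, mem_inter] at hABR
    have hAB : (A \ B ∩ R).Nonempty := by
      obtain ⟨a, ha⟩ := hAR
      exact ⟨a, by grind⟩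
    have hBA : (B \ A ∩ R).Nonempty := by
      obtain ⟨b, hb⟩ := hBR
      exact ⟨b, by grind⟩
    refine isDangerous_and_isDangerous_of_card_cut_add_le hr hconn
      (sdiff_subset.trans hAV) (sdiff_subset.trans hBV) (by simp [hrA]) (by simp [hrB]) hAB hBA ?_
    simpa only [hcA, hcB] using card_cut_sdiff_add_card_cut_sdiff_le E A B

/-- The family of dangerous cuts of a Steiner `k`-edge-connected graph is uncrossable. -/
theorem stmt14 {α : Type*} [DecidableEq α] (V : Finset α) (E : Finset (Sym2 α))
    (hE : ∀ e ∈ E, ¬e.IsDiag ∧ ∀ x ∈ e, x ∈ V)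
    (R : Finset α) (hRV : R ⊆ V) (r : α) (hr : r ∈ R) (k : ℕ) (hk : 1 ≤ k)
    (hconn : ∀ C : Finset α, C ⊆ V → (C ∩ R).Nonempty → (R \ C).Nonempty →
      k ≤ (E.filter fun e => CrossesCut C e).card)
    (A B : Finset α) (hA : IsDangerous V E R r k A) (hB : IsDangerous V E R r k B)
    (hAB : (A ∩ B).Nonempty) (hABd : (A \ B).Nonempty) (hBAd : (B \ A).Nonempty) :
    (IsDangerous V E R r k (A ∩ B) ∧ IsDangerous V E R r k (A ∪ B)) ∨
      (IsDangerous V E R r k (A \ B) ∧ IsDangerous V E R r k (B \ A)) :=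
  stmt14_general V E R r hr k hconn A B hA hB
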